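/- Let X = (I,P) be a probabilistic coherence space and let t : Mfin(I) → [0,∞) satisfy Σ_μ t_μ x^μ ≤ 1 for all x ∈ P. Let p ∈ [0,1) and let x ∈ P with ‖x‖_X ≤ p. Then (1−p)·Dt(x) ∈ P⊥, i.e. for every u ∈ P one has (1−p)·Σ_{a∈I} Dt(x)_a u_a ≤ 1, where Dt(x)_a = Σ_{μ∈Mfin(I)} (μ(a)+1) t_{μ+[a]} x^μ. -/

import Mathlib

/-!
Perturb `x` in the direction of `u ∈ P`: for `q < 1 - p` the point `x + q u` lies below
`(1 - q) z + q u ∈ P`, where `x ≤ (1 - q) z` with `z ∈ P` comes from `‖x‖ ≤ p < 1 - q`.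
Expanding `(x + q u)^μ` and keeping only the terms linear in `q u` gives
`q ⟨u, Dt(x)⟩ ≤ Σ_μ t_μ (x + q u)^μ ≤ 1`, and letting `q` tend to `1 - p` gives the claim.
-/

open scoped ENNReal NNReal

noncomputable section

/-- ⟨u,u'⟩ = Σ_i u_i u'_i in [0,∞]. -/
def dotE {I : Type*} (u v : I → ℝ≥0∞) : ℝ≥0∞ := ∑' i, u i * v i

/-- The orthogonal P⊥ of a set P ⊆ [0,∞]^I. -/
def orthE {I : Type*} (P : Set (I → ℝ≥0∞)) : Set (I → ℝ≥0∞) :=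
  {v | ∀ u ∈ P, dotE u v ≤ 1}

/-- (I,P) is a probabilistic coherence space. -/
structure IsPCS {I : Type*} (P : Set (I → ℝ≥0∞)) : Prop where
  biorth : orthE (orthE P) = P
  nonzero : ∀ a, ∃ x ∈ P, 0 < x a
  bounded : ∀ a, ∃ m : ℝ≥0, ∀ x ∈ P, x a ≤ (m : ℝ≥0∞)

/-- The norm ‖x‖_X = inf{r > 0 | x ∈ rP}. -/
def pnorm {I : Type*} (P : Set (I → ℝ≥0∞)) (x : I → ℝ≥0∞) : ℝ≥0∞ :=
  sInf {r : ℝ≥0∞ | 0 < r ∧ ∃ z ∈ P, x = r • z}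

/-- x^μ = Π_{a∈I} x_a^{μ(a)}. -/
def mpow {I : Type*} (x : I → ℝ≥0∞) (μ : Multiset I) : ℝ≥0∞ := (μ.map x).prod

/-- The derivative Dt(x)_a = Σ_μ (μ(a)+1) t_{μ+[a]} x^μ of a scalar power series. -/
def matDeriv1 {I : Type*} [DecidableEq I] (t : Multiset I → ℝ≥0∞)
    (x : I → ℝ≥0∞) : I → ℝ≥0∞ :=
  fun a => ∑' μ : Multiset I, ((μ.count a : ℝ≥0∞) + 1) * t (μ + {a}) * mpow x μ

section PCS

variable {I : Type*}

section Orthogonal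

variable {Q : Set (I → ℝ≥0∞)} {v w : I → ℝ≥0∞}

lemma dotE_smul_left (c : ℝ≥0∞) (u v : I → ℝ≥0∞) : dotE (c • u) v = c * dotE u v := by
  simp only [dotE, Pi.smul_apply, smul_eq_mul, mul_assoc, ENNReal.tsum_mul_left]

lemma dotE_smul_right (c : ℝ≥0∞) (u v : I → ℝ≥0∞) : dotE u (c • v) = c * dotE u v := by
  simp only [dotE, Pi.smul_apply, smul_eq_mul, mul_left_comm, ENNReal.tsum_mul_left]

lemma dotE_add_right (u v w : I → ℝ≥0∞) : dotE u (v + w) = dotE u v + dotE u w := by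
  simp only [dotE, Pi.add_apply, mul_add, ENNReal.tsum_add]

lemma dotE_mono_right (u : I → ℝ≥0∞) (hwv : w ≤ v) : dotE u w ≤ dotE u v :=
  ENNReal.tsum_le_tsum fun i => mul_le_mul_right (hwv i) _

lemma orthE_mem_of_le (hv : v ∈ orthE Q) (hwv : w ≤ v) : w ∈ orthE Q :=
  fun u hu => (dotE_mono_right u hwv).trans (hv u hu)

lemma orthE_smul_add_smul_mem {s s' : ℝ≥0∞} (hv : v ∈ orthE Q) (hw : w ∈ orthE Q)
    (hs : s + s' = 1) : s • v + s' • w ∈ orthE Q := by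
  intro u hu
  rw [dotE_add_right, dotE_smul_right, dotE_smul_right]
  calc s * dotE u v + s' * dotE u w ≤ s * 1 + s' * 1 := by
        gcongr; exacts [hv u hu, hw u hu]
    _ = 1 := by rw [mul_one, mul_one, hs]

end Orthogonal

namespace IsPCS

variable {P : Set (I → ℝ≥0∞)} (hP : IsPCS P) {v w : I → ℝ≥0∞}
include hP

lemma mem_of_le (hv : v ∈ P) (hwv : w ≤ v) : w ∈ P := by
  rw [← hP.biorth] at hv ⊢
  exact orthE_mem_of_le hv hwv

lemma smul_add_smul_mem {s s' : ℝ≥0∞} (hv : v ∈ P) (hw : w ∈ P) (hs : s + s' = 1) :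
    s • v + s' • w ∈ P := by
  rw [← hP.biorth] at hv hw ⊢
  exact orthE_smul_add_smul_mem hv hw hs

end IsPCS

lemma exists_mem_le_smul_of_pnorm_lt {P : Set (I → ℝ≥0∞)} {x : I → ℝ≥0∞} {s : ℝ≥0∞}
    (hs : pnorm P x < s) : ∃ z ∈ P, x ≤ s • z := by
  obtain ⟨r, ⟨-, z, hz, rfl⟩, hrs⟩ := sInf_lt_iff.mp hs
  exact ⟨z, hz, fun i => mul_le_mul_left hrs.le _⟩

section Monomials

variable (x w : I → ℝ≥0∞)

@[simp]
lemma mpow_zero : mpow x 0 = 1 := rfl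

@[simp]
lemma mpow_cons (b : I) (ν : Multiset I) : mpow x (b ::ₘ ν) = x b * mpow x ν := by
  simp [mpow]

variable [DecidableEq I]

def mpowDeriv (μ : Multiset I) : ℝ≥0∞ := ∑' a, μ.count a * w a * mpow x (μ.erase a)

@[simp]
lemma mpowDeriv_zero : mpowDeriv x w 0 = 0 := by simp [mpowDeriv]

lemma count_mul_mpow_eq (a : I) (ν : Multiset I) :
    ν.count a * mpow x ν = ν.count a * (x a * mpow x (ν.erase a)) := by
  by_cases ha : a ∈ ν
  · rw [← mpow_cons, Multiset.cons_erase ha]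
  · simp [Multiset.count_eq_zero_of_notMem ha]

lemma mpowDeriv_cons (b : I) (ν : Multiset I) :
    mpowDeriv x w (b ::ₘ ν) = x b * mpowDeriv x w ν + w b * mpow x ν := by
  have hterm : ∀ a, ((b ::ₘ ν).count a : ℝ≥0∞) * w a * mpow x ((b ::ₘ ν).erase a)
      = x b * (ν.count a * w a * mpow x (ν.erase a)) + if a = b then w b * mpow x ν else 0 := by
    intro a
    rcases eq_or_ne a b with rfl | hab
    · rw [Multiset.count_cons_self, Multiset.erase_cons_head, if_pos rfl]
      push_cast
      calc ((ν.count a : ℝ≥0∞) + 1) * w a * mpow x ν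
          = w a * (ν.count a * mpow x ν) + w a * mpow x ν := by ring
        _ = x a * (ν.count a * w a * mpow x (ν.erase a)) + w a * mpow x ν := by
          rw [count_mul_mpow_eq]; ring
    · rw [Multiset.count_cons_of_ne hab, Multiset.erase_cons_tail _ (Ne.symm hab), if_neg hab,
        mpow_cons, add_zero]
      ring
  rw [mpowDeriv, tsum_congr hterm, ENNReal.tsum_add, ENNReal.tsum_mul_left, tsum_ite_eq,
    mpowDeriv]

lemma mpow_add_mpowDeriv_le (μ : Multiset I) :
    mpow x μ + mpowDeriv x w μ ≤ mpow (x + w) μ := by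
  induction μ using Multiset.induction with
  | empty => simp
  | cons b ν ih =>
    rw [mpow_cons, mpow_cons, mpowDeriv_cons, Pi.add_apply]
    calc x b * mpow x ν + (x b * mpowDeriv x w ν + w b * mpow x ν)
        ≤ x b * mpow x ν + (x b * mpowDeriv x w ν + w b * mpow x ν)
            + w b * mpowDeriv x w ν := le_self_add
      _ = (x b + w b) * (mpow x ν + mpowDeriv x w ν) := by ring
      _ ≤ (x b + w b) * mpow (x + w) ν := by gcongr

end Monomials

lemma tsum_comp_add_singleton {α : Type*} [AddCommMonoid α] [TopologicalSpace α] (a : I)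
    {f : Multiset I → α} (hf : ∀ μ, a ∉ μ → f μ = 0) :
    ∑' ν : Multiset I, f (ν + {a}) = ∑' μ, f μ := by
  refine Function.Injective.tsum_eq (add_left_injective ({a} : Multiset I)) ?_
  intro μ hμ
  have ha : a ∈ μ := by_contra fun ha => hμ (hf μ ha)
  obtain ⟨ν, rfl⟩ := Multiset.exists_cons_of_mem ha
  exact ⟨ν, by simp only [add_comm ν, Multiset.singleton_add]⟩

lemma tsum_mul_mpowDeriv [DecidableEq I] (t : Multiset I → ℝ≥0∞) (x w : I → ℝ≥0∞) :
    ∑' μ, t μ * mpowDeriv x w μ = dotE w (matDeriv1 t x) := by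
  simp only [mpowDeriv, ← ENNReal.tsum_mul_left]
  rw [ENNReal.tsum_comm]
  refine tsum_congr fun a => ?_
  rw [← tsum_comp_add_singleton a (fun μ ha => by simp [Multiset.count_eq_zero_of_notMem ha]),
    matDeriv1, ← ENNReal.tsum_mul_left]
  refine tsum_congr fun ν => ?_
  rw [Multiset.count_add, Multiset.count_singleton_self, add_comm ν, Multiset.singleton_add,
    Multiset.erase_cons_head]
  push_cast
  ring

lemma mul_dotE_matDeriv1_le_one [DecidableEq I] {P : Set (I → ℝ≥0∞)} (hP : IsPCS P)
    {t : Multiset I → ℝ≥0∞} (ht : ∀ x ∈ P, ∑' μ : Multiset I, t μ * mpow x μ ≤ 1)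
    {x u : I → ℝ≥0∞} (hu : u ∈ P) {q : ℝ≥0∞} (hq : pnorm P x < 1 - q) :
    q * dotE u (matDeriv1 t x) ≤ 1 := by
  obtain ⟨z, hz, hxz⟩ := exists_mem_le_smul_of_pnorm_lt hq
  have hq1 : q ≤ 1 := (tsub_pos_iff_lt.mp (pos_of_gt hq)).le
  have hy : x + q • u ∈ P :=
    hP.mem_of_le (hP.smul_add_smul_mem hz hu (tsub_add_cancel_of_le hq1)) (add_le_add_left hxz _)
  calc q * dotE u (matDeriv1 t x) = ∑' μ, t μ * mpowDeriv x (q • u) μ := by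
        rw [tsum_mul_mpowDeriv, dotE_smul_left]
    _ ≤ ∑' μ, t μ * mpow (x + q • u) μ :=
        ENNReal.tsum_le_tsum fun μ => by
          gcongr; exact le_add_self.trans (mpow_add_mpowDeriv_le x _ μ)
    _ ≤ 1 := ht _ hy

end PCS

theorem stmt9_general {I : Type*} [DecidableEq I]
    (P : Set (I → ℝ≥0∞)) (hP : IsPCS P)
    (t : Multiset I → ℝ≥0∞)
    (ht : ∀ x ∈ P, ∑' μ : Multiset I, t μ * mpow x μ ≤ 1)
    (p : ℝ≥0∞)
    (x : I → ℝ≥0∞) (hxp : pnorm P x ≤ p) :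
    (fun a => (1 - p) * matDeriv1 t x a) ∈ orthE P := by
  intro u hu
  rw [show (fun a => (1 - p) * matDeriv1 t x a) = (1 - p) • matDeriv1 t x from rfl,
    dotE_smul_right]
  refine ENNReal.mul_le_of_forall_lt fun q hq d hd => ?_
  have hxq : pnorm P x < 1 - q := hxp.trans_lt (lt_tsub_comm.mp hq)
  exact (mul_le_mul_right hd.le q).trans (mul_dotE_matDeriv1_le_one hP ht hu hxq)

/-- If t : !X ⊸ 1 (i.e. Σ_μ t_μ x^μ ≤ 1 on P), p ∈ [0,1) and ‖x‖_X ≤ p, then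
(1−p)·Dt(x) ∈ P⊥. -/
theorem stmt9 {I : Type*} [Countable I] [DecidableEq I]
    (P : Set (I → ℝ≥0∞)) (hP : IsPCS P)
    (t : Multiset I → ℝ≥0∞) (htfin : ∀ μ, t μ ≠ ⊤)
    (ht : ∀ x ∈ P, ∑' μ : Multiset I, t μ * mpow x μ ≤ 1)
    (p : ℝ≥0∞) (hp : p < 1)
    (x : I → ℝ≥0∞) (hx : x ∈ P) (hxp : pnorm P x ≤ p) :
    (fun a => (1 - p) * matDeriv1 t x a) ∈ orthE P :=
  stmt9_general P hP t ht p x hxp
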